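/- arXiv:math/0110088 — 3 statements merged into one kernel-verified Lean document; each statement's English description precedes it below -/
import Mathlib

section
/- Let S be a smooth symmetric covariant 2-tensor field on ℝ^D (a Killing tensor of degree 2 for the flat metric), i.e. satisfying ∂_{(λ} S_{μν)} = 0 (complete symmetrization of ∂_λ S_{μν} over λ, μ, ν vanishes). Then every component S_{μν} is a polynomial function on ℝ^D of degree at most 2. -/
/-- Partial derivative of `f : ℝ^D → ℝ` in the `μ`-th coordinate direction. -/
noncomputable def pd {D : ℕ} (μ : Fin D) (f : (Fin D → ℝ) → ℝ) : (Fin D → ℝ) → ℝ :=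
  fun x => fderiv ℝ f x (Pi.single μ 1)

section helpers

variable {D : ℕ}

lemma pd_contDiff {f : (Fin D → ℝ) → ℝ} (hf : ContDiff ℝ (⊤ : ℕ∞) f) (μ : Fin D) :
    ContDiff ℝ (⊤ : ℕ∞) (pd μ f) :=
  (hf.fderiv_right (by simp)).clm_apply contDiff_const

lemma pd_pd {f : (Fin D → ℝ) → ℝ} (hf : ContDiff ℝ (⊤ : ℕ∞) f) (a b : Fin D) (x : Fin D → ℝ) :
    pd a (pd b f) x = fderiv ℝ (fderiv ℝ f) x (Pi.single a 1) (Pi.single b 1) := by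
  have hd : DifferentiableAt ℝ (fderiv ℝ f) x :=
    ((show ContDiff ℝ (⊤ : ℕ∞) (fderiv ℝ f) from hf.fderiv_right (by simp)).differentiable (by simp)) x
  have h1 : pd b f = fun y => (fderiv ℝ f y) (Pi.single b 1) := rfl
  rw [pd, h1, fderiv_clm_apply hd (differentiableAt_const _)]
  simp

lemma pd_comm {f : (Fin D → ℝ) → ℝ} (hf : ContDiff ℝ (⊤ : ℕ∞) f) (a b : Fin D) (x : Fin D → ℝ) :
    pd a (pd b f) x = pd b (pd a f) x := by
  rw [pd_pd hf, pd_pd hf]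
  exact second_derivative_symmetric (fun y => ((hf.differentiable (by simp)) y).hasFDerivAt)
    (((show ContDiff ℝ (⊤ : ℕ∞) (fderiv ℝ f) from hf.fderiv_right (by simp)).differentiable (by simp)) x).hasFDerivAt _ _

lemma pd_sum3 {f g h : (Fin D → ℝ) → ℝ} (hf : Differentiable ℝ f)
    (hg : Differentiable ℝ g) (hh : Differentiable ℝ h)
    (hsum : ∀ x, f x + g x + h x = 0) (μ : Fin D) (x : Fin D → ℝ) :
    pd μ f x + pd μ g x + pd μ h x = 0 := by
  have H : HasFDerivAt (fun y => f y + g y + h y)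
      (fderiv ℝ f x + fderiv ℝ g x + fderiv ℝ h x) x :=
    ((hf x).hasFDerivAt.add (hg x).hasFDerivAt).add (hh x).hasFDerivAt
  have h0 : (fun y => f y + g y + h y) = fun _ => (0 : ℝ) := funext hsum
  have H0 : HasFDerivAt (fun y => f y + g y + h y) (0 : (Fin D → ℝ) →L[ℝ] ℝ) x := by
    rw [h0]; exact hasFDerivAt_const 0 x
  have := H.unique H0
  have h2 := congrArg (fun (L : (Fin D → ℝ) →L[ℝ] ℝ) => L (Pi.single μ 1)) this
  simpa [pd] using h2

lemma const_of_pd_zero {f : (Fin D → ℝ) → ℝ} (hf : Differentiable ℝ f)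
    (h : ∀ μ x, pd μ f x = 0) (x : Fin D → ℝ) : f x = f 0 := by
  apply is_const_of_fderiv_eq_zero hf
  intro y
  ext v
  have hv : v = ∑ i, (v i) • (Pi.single i 1 : Fin D → ℝ) := by
    conv_lhs => rw [← Finset.univ_sum_single v]
    congr 1; funext i
    rw [← Pi.single_smul, smul_eq_mul, mul_one]
  rw [ContinuousLinearMap.zero_apply, hv, map_sum]
  refine Finset.sum_eq_zero fun i _ => ?_
  rw [map_smul]
  have := h i y
  rw [pd] at this
  rw [this, smul_zero]

end helpers

section recon

variable {D : ℕ}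

lemma hasFDerivAt_lin (c : Fin D → ℝ) (y : Fin D → ℝ) :
    HasFDerivAt (fun z : Fin D → ℝ => ∑ a, c a * z a)
      (∑ a, c a • (ContinuousLinearMap.proj a : (Fin D → ℝ) →L[ℝ] ℝ)) y := by
  apply HasFDerivAt.fun_sum
  intro a _
  exact ((ContinuousLinearMap.proj a : (Fin D → ℝ) →L[ℝ] ℝ).hasFDerivAt).const_mul (c a)

lemma lin_apply (c : Fin D → ℝ) (e : Fin D) :
    (∑ a, c a • (ContinuousLinearMap.proj a : (Fin D → ℝ) →L[ℝ] ℝ)) (Pi.single e 1)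
      = c e := by
  simp [ContinuousLinearMap.sum_apply, Pi.single_apply]

lemma eq_affine {g : (Fin D → ℝ) → ℝ} (hg : Differentiable ℝ g)
    (c : Fin D → ℝ) (hpd : ∀ a x, pd a g x = c a) (x : Fin D → ℝ) :
    g x = g 0 + ∑ a, c a * x a := by
  have hq : ∀ y, HasFDerivAt (fun z => g z - ∑ a, c a * z a)
      (fderiv ℝ g y - ∑ a, c a • (ContinuousLinearMap.proj a : (Fin D → ℝ) →L[ℝ] ℝ)) y :=
    fun y => (hg y).hasFDerivAt.sub (hasFDerivAt_lin c y)
  have hdq : Differentiable ℝ (fun z => g z - ∑ a, c a * z a) :=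
    fun y => (hq y).differentiableAt
  have hz : ∀ e y, pd e (fun z => g z - ∑ a, c a * z a) y = 0 := by
    intro e y
    rw [pd, (hq y).fderiv, ContinuousLinearMap.sub_apply, lin_apply]
    have h1 : fderiv ℝ g y (Pi.single e 1) = c e := hpd e y
    rw [h1, sub_self]
  have h := const_of_pd_zero hdq hz x
  simp only [Pi.zero_apply, mul_zero, Finset.sum_const_zero, sub_zero] at h
  linarith [h]

lemma hasFDerivAt_quad (c : Fin D → Fin D → ℝ) (y : Fin D → ℝ) :
    HasFDerivAt (fun z : Fin D → ℝ => ∑ a, ∑ b, c a b * (z a * z b))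
      (∑ a, ∑ b, c a b • ((y a) • (ContinuousLinearMap.proj b : (Fin D → ℝ) →L[ℝ] ℝ)
        + (y b) • (ContinuousLinearMap.proj a : (Fin D → ℝ) →L[ℝ] ℝ))) y := by
  apply HasFDerivAt.fun_sum
  intro a _
  apply HasFDerivAt.fun_sum
  intro b _
  exact (((ContinuousLinearMap.proj a : (Fin D → ℝ) →L[ℝ] ℝ).hasFDerivAt).mul
    ((ContinuousLinearMap.proj b : (Fin D → ℝ) →L[ℝ] ℝ).hasFDerivAt)).const_mul (c a b)

lemma quad_apply (c : Fin D → Fin D → ℝ) (y : Fin D → ℝ) (e : Fin D) :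
    (∑ a, ∑ b, c a b • ((y a) • (ContinuousLinearMap.proj b : (Fin D → ℝ) →L[ℝ] ℝ)
        + (y b) • (ContinuousLinearMap.proj a : (Fin D → ℝ) →L[ℝ] ℝ))) (Pi.single e 1)
      = ∑ a, c a e * y a + ∑ b, c e b * y b := by
  simp [ContinuousLinearMap.sum_apply, Pi.single_apply, mul_ite, mul_add,
    Finset.sum_add_distrib, Finset.mul_sum, mul_comm]

lemma eq_quad {f : (Fin D → ℝ) → ℝ} (hf : Differentiable ℝ f)
    (d : Fin D → ℝ) (c : Fin D → Fin D → ℝ) (hcs : ∀ a b, c a b = c b a)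
    (hpd : ∀ e x, pd e f x = d e + ∑ a, c a e * x a) (x : Fin D → ℝ) :
    f x = f 0 + ∑ a, d a * x a + ∑ a, ∑ b, (c a b / 2) * (x a * x b) := by
  set c' : Fin D → Fin D → ℝ := fun a b => c a b / 2 with hc'
  have hq : ∀ y, HasFDerivAt
      (fun z => f z - ∑ a, d a * z a - ∑ a, ∑ b, c' a b * (z a * z b))
      (fderiv ℝ f y - ∑ a, d a • (ContinuousLinearMap.proj a : (Fin D → ℝ) →L[ℝ] ℝ)
        - ∑ a, ∑ b, c' a b • ((y a) • (ContinuousLinearMap.proj b : (Fin D → ℝ) →L[ℝ] ℝ)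
          + (y b) • (ContinuousLinearMap.proj a : (Fin D → ℝ) →L[ℝ] ℝ))) y :=
    fun y => ((hf y).hasFDerivAt.sub (hasFDerivAt_lin d y)).sub (hasFDerivAt_quad c' y)
  have hdq : Differentiable ℝ
      (fun z => f z - ∑ a, d a * z a - ∑ a, ∑ b, c' a b * (z a * z b)) :=
    fun y => (hq y).differentiableAt
  have hz : ∀ e y, pd e (fun z => f z - ∑ a, d a * z a - ∑ a, ∑ b, c' a b * (z a * z b)) y = 0 := by
    intro e y
    rw [pd, (hq y).fderiv, ContinuousLinearMap.sub_apply, ContinuousLinearMap.sub_apply,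
      lin_apply, quad_apply]
    have h1 : fderiv ℝ f y (Pi.single e 1) = d e + ∑ a, c a e * y a := hpd e y
    rw [h1]
    have h2 : ∑ a, c' a e * y a + ∑ b, c' e b * y b = ∑ a, c a e * y a := by
      rw [← Finset.sum_add_distrib]
      refine Finset.sum_congr rfl fun a _ => ?_
      simp only [hc']
      rw [hcs e a]
      ring
    rw [h2]
    ring
  have h := const_of_pd_zero hdq hz x
  simp only [Pi.zero_apply, mul_zero, zero_mul, Finset.sum_const_zero, sub_zero] at h
  have hx : f x = f 0 + ∑ a, d a * x a + ∑ a, ∑ b, c' a b * (x a * x b) := by linarith [h]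
  simpa [hc'] using hx

end recon

section algebra

lemma killing3 {D : ℕ} (e : Fin D → Fin D → Fin D → Fin D → Fin D → ℝ)
    (s12 : ∀ p q r m n, e p q r m n = e q p r m n)
    (s23 : ∀ p q r m n, e p q r m n = e p r q m n)
    (s45 : ∀ p q r m n, e p q r m n = e p q r n m)
    (hk : ∀ p q lam m n, e p q lam m n + e p q m n lam + e p q n lam m = 0)
    (a b c m n : Fin D) : e a b c m n = 0 := by
  have cyc : ∀ p q r u v, e p q r u v = e q r p u v :=
    fun p q r u v => (s12 p q r u v).trans (s23 q p r u v)
  have i1 := hk a b c m n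
  have i2 := hk a c b m n
  have i3 := hk b c a m n
  have i4 := hk a m b c n
  have i5 := hk a n b c m
  have i6 := hk m n a b c
  have i7 := hk b m a c n
  have i8 := hk b n a c m
  have i9 := hk c m a b n
  have i10 := hk c n a b m
  have n01 : e a b m n c = e a b m c n := s45 a b m n c
  have n02 : e a c b m n = e a b c m n := (s23 a b c m n).symm
  have n03 : e a c m n b = e a c m b n := s45 a c m n b
  have n04 : e b c a m n = e a b c m n := (cyc a b c m n).symm
  have n05 : e b c m n a = e b c m a n := s45 b c m n a
  have n06 : e a m b c n = e a b m c n := (s23 a b m c n).symm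
  have n07 : e a m c n b = e a c m b n := (s45 a m c n b).trans (s23 a c m b n).symm
  have n08 : e a n b c m = e a b n c m := (s23 a b n c m).symm
  have n09 : e a n c m b = e a c n b m := (s45 a n c m b).trans (s23 a c n b m).symm
  have n10 : e a n m b c = e a m n b c := (s23 a m n b c).symm
  have n11 : e m n a b c = e a m n b c := (cyc a m n b c).symm
  have n12 : e m n b c a = e b m n a c := (s45 m n b c a).trans (cyc b m n a c).symm
  have n13 : e m n c a b = e c m n a b := (cyc c m n a b).symm
  have n14 : e b m a c n = e a b m c n := (cyc a b m c n).symm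
  have n15 : e b m c n a = e b c m a n := (s45 b m c n a).trans (s23 b c m a n).symm
  have n16 : e b n a c m = e a b n c m := (cyc a b n c m).symm
  have n17 : e b n c m a = e b c n a m := (s45 b n c m a).trans (s23 b c n a m).symm
  have n18 : e b n m a c = e b m n a c := (s23 b m n a c).symm
  have n19 : e c m a b n = e a c m b n := (cyc a c m b n).symm
  have n20 : e c m b n a = e b c m a n := (s45 c m b n a).trans (cyc b c m a n).symm
  have n21 : e c n a b m = e a c n b m := (cyc a c n b m).symm
  have n22 : e c n b m a = e b c n a m := (s45 c n b m a).trans (cyc b c n a m).symm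
  have n23 : e c n m a b = e c m n a b := (s23 c m n a b).symm
  linarith

end algebra

/-- a smooth symmetric 2-tensor field `S` on `ℝ^D` satisfying the Killing
tensor equation `∂_λ S_{μν} + ∂_μ S_{νλ} + ∂_ν S_{λμ} = 0` has polynomial components of
degree at most `2`. -/
theorem stmt4 (D : ℕ) (hD : 1 ≤ D) (S : Fin D → Fin D → (Fin D → ℝ) → ℝ)
    (hsmooth : ∀ μ ν, ContDiff ℝ (⊤ : ℕ∞) (S μ ν))
    (hsym : ∀ μ ν, S μ ν = S ν μ)
    (hKilling : ∀ lam μ ν : Fin D, ∀ x : Fin D → ℝ,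
      pd lam (S μ ν) x + pd μ (S ν lam) x + pd ν (S lam μ) x = 0) :
    ∀ μ ν, ∃ P : MvPolynomial (Fin D) ℝ, P.totalDegree ≤ 2 ∧
      ∀ x, S μ ν x = MvPolynomial.eval x P := by
  
  have hs1 : ∀ μ ν a, ContDiff ℝ (⊤ : ℕ∞) (pd a (S μ ν)) := fun μ ν a => pd_contDiff (hsmooth μ ν) a
  have hs2 : ∀ μ ν a b, ContDiff ℝ (⊤ : ℕ∞) (pd a (pd b (S μ ν))) :=
    fun μ ν a b => pd_contDiff (hs1 μ ν b) a
  have hs3 : ∀ μ ν a b c, ContDiff ℝ (⊤ : ℕ∞) (pd a (pd b (pd c (S μ ν)))) :=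
    fun μ ν a b c => pd_contDiff (hs2 μ ν b c) a
  -- first derivative of the Killing identity
  have K1 : ∀ q lam μ ν : Fin D, ∀ x, pd q (pd lam (S μ ν)) x + pd q (pd μ (S ν lam)) x
      + pd q (pd ν (S lam μ)) x = 0 := by
    intro q lam μ ν x
    exact pd_sum3 ((hs1 μ ν lam).differentiable (by simp)) ((hs1 ν lam μ).differentiable (by simp))
      ((hs1 lam μ ν).differentiable (by simp)) (hKilling lam μ ν) q x
  -- second derivative of the Killing identity
  have K2 : ∀ p q lam μ ν : Fin D, ∀ x, pd p (pd q (pd lam (S μ ν))) x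
      + pd p (pd q (pd μ (S ν lam))) x + pd p (pd q (pd ν (S lam μ))) x = 0 := by
    intro p q lam μ ν x
    exact pd_sum3 ((hs2 μ ν q lam).differentiable (by simp))
      ((hs2 ν lam q μ).differentiable (by simp)) ((hs2 lam μ q ν).differentiable (by simp))
      (fun y => K1 q lam μ ν y) p x
  -- all third partial derivatives vanish
  have E0 : ∀ μ ν p q r : Fin D, ∀ x, pd p (pd q (pd r (S μ ν))) x = 0 := by
    intro μ ν p q r x
    refine killing3 (fun p q r m n => pd p (pd q (pd r (S m n))) x) ?_ ?_ ?_ ?_ p q r μ ν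
    · intro p q r m n
      exact pd_comm (pd_contDiff (hsmooth m n) r) p q x
    · intro p q r m n
      have h : pd q (pd r (S m n)) = pd r (pd q (S m n)) :=
        funext (pd_comm (hsmooth m n) q r)
      show pd p (pd q (pd r (S m n))) x = pd p (pd r (pd q (S m n))) x
      rw [h]
    · intro p q r m n
      show pd p (pd q (pd r (S m n))) x = pd p (pd q (pd r (S n m))) x
      rw [hsym m n]
    · intro p q lam m n
      exact K2 p q lam m n x
  intro μ ν
  set f := S μ ν with hf
  set c2 : Fin D → Fin D → ℝ := fun a b => pd a (pd b f) 0 with hc2def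
  have hc2 : ∀ a b : Fin D, ∀ x, pd a (pd b f) x = c2 a b := by
    intro a b x
    exact const_of_pd_zero ((hs2 μ ν a b).differentiable (by simp))
      (fun c y => E0 μ ν c a b y) x
  have hc2s : ∀ a b, c2 a b = c2 b a := fun a b => pd_comm (hsmooth μ ν) a b 0
  set d : Fin D → ℝ := fun a => pd a f 0 with hd
  have hlin : ∀ e : Fin D, ∀ x, pd e f x = d e + ∑ a, c2 a e * x a := by
    intro e x
    exact eq_affine ((hs1 μ ν e).differentiable (by simp)) (fun a => c2 a e)
      (fun a y => hc2 a e y) x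
  have hquad := eq_quad ((hsmooth μ ν).differentiable (by simp)) d c2 hc2s hlin
  refine ⟨MvPolynomial.C (f 0) + ∑ a, MvPolynomial.C (d a) * MvPolynomial.X a
    + ∑ a, ∑ b, MvPolynomial.C (c2 a b / 2) * (MvPolynomial.X a * MvPolynomial.X b), ?_, ?_⟩
  · refine le_trans (MvPolynomial.totalDegree_add _ _) ?_
    rw [max_le_iff]
    constructor
    · refine le_trans (MvPolynomial.totalDegree_add _ _) ?_
      rw [max_le_iff]
      constructor
      · simp [MvPolynomial.totalDegree_C]
      · refine le_trans (MvPolynomial.totalDegree_finset_sum _ _) ?_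
        refine Finset.sup_le fun a _ => ?_
        refine le_trans (MvPolynomial.totalDegree_mul _ _) ?_
        simp [MvPolynomial.totalDegree_C, MvPolynomial.totalDegree_X]
    · refine le_trans (MvPolynomial.totalDegree_finset_sum _ _) ?_
      refine Finset.sup_le fun a _ => ?_
      refine le_trans (MvPolynomial.totalDegree_finset_sum _ _) ?_
      refine Finset.sup_le fun b _ => ?_
      refine le_trans (MvPolynomial.totalDegree_mul _ _) ?_
      have hX : (MvPolynomial.X a * MvPolynomial.X b : MvPolynomial (Fin D) ℝ).totalDegree ≤ 2 := by
        refine le_trans (MvPolynomial.totalDegree_mul _ _) ?_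
        simp [MvPolynomial.totalDegree_X]
      simpa [MvPolynomial.totalDegree_C] using hX
  · intro x
    rw [hf, hquad x]
    simp [map_sum]
end

section
/- Let E be a graded vector space with an endomorphism d of degree 1 satisfying d^N = 0 (an N-complex), and for 1 ≤ k ≤ N−1 define H_(k)(E) = Ker(d^k)/Im(d^{N−k}). Let k, ℓ ≥ 1 with k + ℓ ≤ N−1. Then the hexagon of induced maps H_(k) →^{[i]^ℓ} H_(ℓ+k) →^{[d]^k} H_(ℓ) →^{[i]^{N−ℓ−k}} H_(N−k) →^{[d]^ℓ} H_(N−ℓ) →^{[d]^{N−ℓ−k}} H_(N−ℓ−k) →^{[i]^k} H_(k) is exact at every vertex, where [i] is induced by the inclusion Ker(d^k) ⊆ Ker(d^{k+1}) and [d] is induced by applying d. -/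
/-- exactness of the hexagon of generalized cohomology of an `N`-complex
`(E, d)`, `d^N = 0`, with `H_(k) = Ker d^k / Im d^{N−k}`, stated elementwise at each of
the six vertices of the hexagon
`H_(k) →[i]^ℓ H_(ℓ+k) →[d]^k H_(ℓ) →[i]^{N−ℓ−k} H_(N−k) →[d]^ℓ H_(N−ℓ−k) →[i]^k
H_(N−ℓ) →[d]^{N−ℓ−k} H_(k)`. -/
theorem stmt13 (N k l : ℕ) (hN : 2 ≤ N) (hk : 1 ≤ k) (hl : 1 ≤ l) (hkl : k + l ≤ N - 1)
    (E : Type*) [AddCommGroup E] [Module ℝ E]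
    (d : E →ₗ[ℝ] E) (hd : d ^ N = 0) :
    -- exactness at H_(ℓ+k) : incoming [i]^ℓ from H_(k), outgoing [d]^k to H_(ℓ)
    ((∀ x : E, (d ^ (l + k)) x = 0 →
      ((∃ z, (d ^ k) x = (d ^ (N - l)) z) ↔
        ∃ y, (d ^ k) y = 0 ∧ ∃ w, x - y = (d ^ (N - l - k)) w)) ∧
    -- exactness at H_(ℓ) : incoming [d]^k from H_(ℓ+k), outgoing [i]^{N−ℓ−k} to H_(N−k)
    (∀ x : E, (d ^ l) x = 0 →
      ((∃ z, x = (d ^ k) z) ↔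
        ∃ y, (d ^ (l + k)) y = 0 ∧ ∃ w, x - (d ^ k) y = (d ^ (N - l)) w)) ∧
    -- exactness at H_(N−k) : incoming [i]^{N−ℓ−k} from H_(ℓ), outgoing [d]^ℓ to H_(N−ℓ−k)
    (∀ x : E, (d ^ (N - k)) x = 0 →
      ((∃ z, (d ^ l) x = (d ^ (l + k)) z) ↔
        ∃ y, (d ^ l) y = 0 ∧ ∃ w, x - y = (d ^ k) w)) ∧
    -- exactness at H_(N−ℓ−k) : incoming [d]^ℓ from H_(N−k), outgoing [i]^k to H_(N−ℓ)
    (∀ x : E, (d ^ (N - l - k)) x = 0 →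
      ((∃ z, x = (d ^ l) z) ↔
        ∃ y, (d ^ (N - k)) y = 0 ∧ ∃ w, x - (d ^ l) y = (d ^ (l + k)) w)) ∧
    -- exactness at H_(N−ℓ) : incoming [i]^k from H_(N−ℓ−k), outgoing [d]^{N−ℓ−k} to H_(k)
    (∀ x : E, (d ^ (N - l)) x = 0 →
      ((∃ z, (d ^ (N - l - k)) x = (d ^ (N - k)) z) ↔
        ∃ y, (d ^ (N - l - k)) y = 0 ∧ ∃ w, x - y = (d ^ l) w)) ∧
    -- exactness at H_(k) : incoming [d]^{N−ℓ−k} from H_(N−ℓ), outgoing [i]^ℓ to H_(ℓ+k)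
    (∀ x : E, (d ^ k) x = 0 →
      ((∃ z, x = (d ^ (N - l - k)) z) ↔
        ∃ y, (d ^ (N - l)) y = 0 ∧ ∃ w, x - (d ^ (N - l - k)) y = (d ^ (N - k)) w))) := by

  set m := N - l - k with hmdef
  have h1 : N - l = k + m := by omega
  have h2 : N - k = l + m := by omega
  have key : ∀ (a b : ℕ) (x : E), (d ^ (a + b)) x = (d ^ a) ((d ^ b) x) := by
    intro a b x
    rw [pow_add]; rfl
  have hzero : ∀ x : E, (d ^ (k + (l + m))) x = 0 := by
    intro x
    have : k + (l + m) = N := by omega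
    rw [this, hd]; rfl
  rw [h1, h2]
  refine ⟨?_, ?_, ?_, ?_, ?_, ?_⟩
  · -- vertex H_(l+k)
    intro x hx
    constructor
    · rintro ⟨z, hz⟩
      refine ⟨x - (d ^ m) z, ?_, z, by abel⟩
      rw [map_sub, hz, ← key, sub_self]
    · rintro ⟨y, hy, w, hw⟩
      have hx' : x = y + (d ^ m) w := by rw [← hw]; abel
      exact ⟨w, by rw [hx', map_add, hy, zero_add, ← key]⟩
  · -- vertex H_(l)
    intro x hx
    constructor
    · rintro ⟨z, rfl⟩
      refine ⟨z, ?_, 0, by rw [map_zero, sub_self]⟩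
      rw [← key] at hx
      exact hx
    · rintro ⟨y, hy, w, hw⟩
      refine ⟨y + (d ^ m) w, ?_⟩
      rw [map_add, ← key]
      have : x = (d ^ k) y + (d ^ (k + m)) w := by rw [← hw]; abel
      exact this
  · -- vertex H_(N-k)
    intro x hx
    constructor
    · rintro ⟨z, hz⟩
      refine ⟨x - (d ^ k) z, ?_, z, by abel⟩
      rw [map_sub, hz, ← key, add_comm l k, sub_self]
    · rintro ⟨y, hy, w, hw⟩
      have hx' : x = y + (d ^ k) w := by rw [← hw]; abel
      exact ⟨w, by rw [hx', map_add, hy, zero_add, ← key]⟩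
  · -- vertex H_(m)
    intro x hx
    constructor
    · rintro ⟨z, rfl⟩
      refine ⟨z, ?_, 0, by rw [map_zero, sub_self]⟩
      rw [← key] at hx
      rwa [add_comm m l] at hx
    · rintro ⟨y, hy, w, hw⟩
      refine ⟨y + (d ^ k) w, ?_⟩
      rw [map_add, ← key]
      have : x = (d ^ l) y + (d ^ (l + k)) w := by rw [← hw]; abel
      exact this
  · -- vertex H_(N-l)
    intro x hx
    constructor
    · rintro ⟨z, hz⟩
      refine ⟨x - (d ^ l) z, ?_, z, by abel⟩
      rw [map_sub, hz, ← key, add_comm l m, sub_self]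
    · rintro ⟨y, hy, w, hw⟩
      have hx' : x = y + (d ^ l) w := by rw [← hw]; abel
      exact ⟨w, by rw [hx', map_add, hy, zero_add, ← key, add_comm m l]⟩
  · -- vertex H_(k)
    intro x hx
    constructor
    · rintro ⟨z, rfl⟩
      refine ⟨z, ?_, 0, by rw [map_zero, sub_self]⟩
      rw [← key] at hx
      exact hx
    · rintro ⟨y, hy, w, hw⟩
      refine ⟨y + (d ^ l) w, ?_⟩
      rw [map_add, ← key, add_comm m l]
      have : x = (d ^ m) y + (d ^ (l + m)) w := by rw [← hw]; abel
      exact this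
end

section
/- Let E be a vector space with an endomorphism d satisfying d^N = 0. If for some n there exist linear maps h_k (k = 0,…,N−1) such that ∑_{k=0}^{N−1} d^{N−1−k} ∘ h_k ∘ d^k is the identity on E^n (a generalized algebraic homotopy in degree n), then for every k ∈ {1,…,N−1}, any ω ∈ E^n with d^k ω = 0 satisfies ω = d^{N−k} α where α = ∑_{p=0}^{k−1} d^{k−1−p} h_p d^p ω; hence H^n_(k)(E) = 0. -/
/-- if an `N`-differential module `(E, d)`, `d^N = 0`, admits a generalized
algebraic homotopy `∑_{k=0}^{N−1} d^{N−1−k} ∘ h_k ∘ d^k = id`, then for every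
`k ∈ {1,…,N−1}` any `ω` with `d^k ω = 0` satisfies
`ω = d^{N−k} (∑_{p=0}^{k−1} d^{k−1−p} h_p d^p ω)`; hence `H_(k) = 0`. -/
theorem stmt14 (N : ℕ) (hN : 2 ≤ N)
    (E : Type*) [AddCommGroup E] [Module ℝ E]
    (d : E →ₗ[ℝ] E) (hd : d ^ N = 0)
    (h : ℕ → E →ₗ[ℝ] E)
    (hhomotopy : ∀ x : E, ∑ p ∈ Finset.range N, (d ^ (N - 1 - p)) (h p ((d ^ p) x)) = x) :
    ∀ k, 1 ≤ k → k ≤ N - 1 → ∀ ω : E, (d ^ k) ω = 0 →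
      ω = (d ^ (N - k)) (∑ p ∈ Finset.range k, (d ^ (k - 1 - p)) (h p ((d ^ p) ω))) := by
  intro k hk1 hk2 ω hω
  have hkN : k ≤ N := le_trans hk2 (Nat.sub_le N 1)
  have key : (d ^ (N - k)) (∑ p ∈ Finset.range k, (d ^ (k - 1 - p)) (h p ((d ^ p) ω)))
      = ∑ p ∈ Finset.range N, (d ^ (N - 1 - p)) (h p ((d ^ p) ω)) := by
    rw [map_sum]
    rw [← Finset.sum_subset (Finset.range_subset_range.mpr hkN)]
    · apply Finset.sum_congr rfl
      intro p hp
      have hp' : p < k := Finset.mem_range.mp hp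
      have he : N - 1 - p = (N - k) + (k - 1 - p) := by omega
      rw [he, pow_add]
      rfl
    · intro p _ hp
      have hp' : k ≤ p := by
        simp only [Finset.mem_range, not_lt] at hp
        exact hp
      have hz : (d ^ p) ω = 0 := by
        have he : p = (p - k) + k := by omega
        rw [he, pow_add]
        simp [hω]
      rw [hz]
      simp
  rw [key, hhomotopy]
end
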